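/- arXiv:math/0609119 — 2 statements merged into one kernel-verified Lean document; each statement's English description precedes it below -/
import Mathlib

section
/- For all integers n and k with n − 3 ≥ k ≥ 2 and every field 𝔽 of characteristic 2, there exists S_k ⊆ C([n],k) such that (1) the simplicial matroid Sim_k^n(S_k) over 𝔽 is triangulable but not strongly triangulable, and (2) no (k−1)-subset of [n] is simplicial in the k-hyperclique complex ⟨S_k⟩. -/
/-!
Common definitions for simplicial matroids, following Cordovil–Lemos–Linhares Sales,
"Dirac's theorem on simplicial matroids".

We model `[n] = {1,…,n}` by `Fin n`, and a subset of `[n]` by a `Finset (Fin n)`.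
A family `S_k ⊆ C([n],k)` is a `Finset (Finset (Fin n))` (all of whose members
have cardinality `k`, which is imposed by hypotheses in the theorems).
-/

open Finset

/-- The incidence number `[F' : F]`: if `F = i₁ < i₂ < ⋯ < iₘ` and `F' = F \ {iⱼ}`
then `[F' : F] = (-1)ʲ` (with `j` the 1-based position of the deleted element),
and `[F' : F] = 0` otherwise. -/
def inc {n : ℕ} (F' F : Finset (Fin n)) : ℤ :=
  ∑ i ∈ F, if F' = F.erase i then (-1 : ℤ) ^ (F.filter (fun j => j ≤ i)).card else 0

/-- The family `C([n], m)` of `m`-element subsets of `[n]`, as a type. -/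
abbrev Csets (n m : ℕ) := {F : Finset (Fin n) // F.card = m}

/-- `∂_k F`, the boundary of a single `k`-subset `F` of `[n]`,
as a vector of `𝔽^{C([n],k-1)}`. -/
def bvec (𝔽 : Type*) [Field 𝔽] (n k : ℕ) (F : Finset (Fin n)) : Csets n (k - 1) → 𝔽 :=
  fun F' => ((inc F'.1 F : ℤ) : 𝔽)

/-- Independence in the simplicial matroid `Sim_k^n(S_k)` over `𝔽`:
`X ⊆ S_k` is independent iff the vectors `∂_k F`, `F ∈ X`, are linearly independent. -/
def SimIndep (𝔽 : Type*) [Field 𝔽] (n k : ℕ) (Sk X : Finset (Finset (Fin n))) : Prop :=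
  X ⊆ Sk ∧ LinearIndependent 𝔽 (fun F : X => bvec 𝔽 n k F.1)

/-- A circuit of `Sim_k^n(S_k)`: a minimal dependent subset of the ground set. -/
def SimCircuit (𝔽 : Type*) [Field 𝔽] (n k : ℕ) (Sk C : Finset (Finset (Fin n))) : Prop :=
  C ⊆ Sk ∧ ¬ LinearIndependent 𝔽 (fun F : C => bvec 𝔽 n k F.1) ∧
    ∀ C' ⊂ C, LinearIndependent 𝔽 (fun F : C' => bvec 𝔽 n k F.1)

/-- The rank (in `Sim_k^n`) of a set `X` of `k`-subsets of `[n]`: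
the dimension of the span of the boundaries of its members. -/
noncomputable def simRank (𝔽 : Type*) [Field 𝔽] (n k : ℕ) (X : Finset (Finset (Fin n))) : ℕ :=
  Module.finrank 𝔽 (Submodule.span 𝔽 ((fun F => bvec 𝔽 n k F) '' (X : Set (Finset (Fin n)))))

/-- A cocircuit of `Sim_k^n(S_k)`, i.e. a circuit of the dual matroid:
a minimal set `C ⊆ S_k` whose complement does not span (`X` is independent in the dual
matroid iff `r(E ∖ X) = r(E)`). -/
def SimCocircuit (𝔽 : Type*) [Field 𝔽] (n k : ℕ) (Sk C : Finset (Finset (Fin n))) : Prop :=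
  C ⊆ Sk ∧ simRank 𝔽 n k (Sk \ C) < simRank 𝔽 n k Sk ∧
    ∀ C' ⊂ C, simRank 𝔽 n k (Sk \ C') = simRank 𝔽 n k Sk

/-- The boundary map `∂_k : 𝔽^{S_k} → 𝔽^{C([n],k-1)}`. -/
noncomputable def bdryMap (𝔽 : Type*) [Field 𝔽] (n k : ℕ) (Sk : Finset (Finset (Fin n))) :
    (↥Sk → 𝔽) →ₗ[𝔽] (Csets n (k - 1) → 𝔽) :=
  Matrix.mulVecLin (Matrix.of fun (F' : Csets n (k - 1)) (F : ↥Sk) => ((inc F'.1 F.1 : ℤ) : 𝔽))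

/-- The coboundary `δ^{k-1} V` of a `(k-1)`-subset `V` of `[n]`,
as a vector of `𝔽^{S_k}`; its `F`-coordinate is `[V : F]`. -/
def cobdry (𝔽 : Type*) [Field 𝔽] {n : ℕ} (Sk : Finset (Finset (Fin n)))
    (V : Finset (Fin n)) : ↥Sk → 𝔽 :=
  fun F => ((inc V F.1 : ℤ) : 𝔽)

/-- The boundary `∂_{k+1} X` of a `(k+1)`-subset `X` of `[n]`, regarded as a vector
of `𝔽^{S_k}`; its `F`-coordinate is `[F : X]`. -/
def pbdry (𝔽 : Type*) [Field 𝔽] {n : ℕ} (Sk : Finset (Finset (Fin n)))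
    (X : Finset (Fin n)) : ↥Sk → 𝔽 :=
  fun F => ((inc F.1 X : ℤ) : 𝔽)

open scoped Classical in
/-- The support of a vector of `𝔽^{S_k}`, as a set of `k`-subsets of `[n]`. -/
noncomputable def suppFin {𝔽 : Type*} [Field 𝔽] {n : ℕ} {Sk : Finset (Finset (Fin n))}
    (v : ↥Sk → 𝔽) : Finset (Finset (Fin n)) :=
  (Sk.attach.filter fun F => v F ≠ 0).image Subtype.val

/-- `supp(δ^{k-1} V) ⊆ S_k`. -/
noncomputable def suppδ (𝔽 : Type*) [Field 𝔽] {n : ℕ} (Sk : Finset (Finset (Fin n)))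
    (V : Finset (Fin n)) : Finset (Finset (Fin n)) :=
  suppFin (cobdry 𝔽 Sk V)

/-- The cocircuit space of `Sim_k^n(S_k)`: the orthogonal complement, with respect to the
standard bilinear form on `𝔽^{S_k}`, of the circuit space `ker ∂_k`. -/
noncomputable def cocircSpace (𝔽 : Type*) [Field 𝔽] (n k : ℕ) (Sk : Finset (Finset (Fin n))) :
    Submodule 𝔽 (↥Sk → 𝔽) where
  carrier := {w | ∀ v ∈ LinearMap.ker (bdryMap 𝔽 n k Sk), ∑ F, v F * w F = 0}
  zero_mem' := by intro v hv; simp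
  add_mem' := by
    intro a b ha hb v hv
    have h1 := ha v hv
    have h2 := hb v hv
    simp only [Pi.add_apply, mul_add, Finset.sum_add_distrib]
    rw [h1, h2, add_zero]
  smul_mem' := by
    intro c w hw v hv
    have h := hw v hv
    simp only [Pi.smul_apply, smul_eq_mul]
    calc ∑ F, v F * (c * w F) = ∑ F, c * (v F * w F) := by
          exact Finset.sum_congr rfl fun F _ => by ring
      _ = c * ∑ F, v F * w F := (Finset.mul_sum _ _ _).symm
      _ = 0 := by rw [h, mul_zero]

/-- The faces of the `k`-hyperclique complex `⟨S_k⟩`: all `F ⊆ [n]` with `|F| < k`,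
together with all `F` every `k`-element subset of which lies in `S_k`. -/
def IsFace {n : ℕ} (k : ℕ) (Sk : Finset (Finset (Fin n))) (F : Finset (Fin n)) : Prop :=
  F.card < k ∨ ∀ G ⊆ F, G.card = k → G ∈ Sk

/-- A facet of `⟨S_k⟩`: an inclusion-maximal face. -/
def IsFacet {n : ℕ} (k : ℕ) (Sk : Finset (Finset (Fin n))) (F : Finset (Fin n)) : Prop :=
  IsFace k Sk F ∧ ∀ G, IsFace k Sk G → F ⊆ G → F = G

/-- `V` is simplicial in `⟨S_k⟩` if there is exactly one facet `X` of `⟨S_k⟩`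
with `V ⊊ X`. -/
def SimplicialFace {n : ℕ} (k : ℕ) (Sk : Finset (Finset (Fin n))) (V : Finset (Fin n)) : Prop :=
  ∃! X, IsFacet k Sk X ∧ V ⊂ X

/-- The `k`-skeleta of the complexes `Δ_0 = ⟨S_k⟩`, `Δ_{j+1} = Δ_j ∖∖ V_j`, where
`Δ ∖∖ V = ⟨(skeleton of Δ) ∖ supp(δ^{k-1} V)⟩` (0-indexed). -/
noncomputable def delSeq (𝔽 : Type*) [Field 𝔽] {n : ℕ} (Sk : Finset (Finset (Fin n)))
    (V : ℕ → Finset (Fin n)) : ℕ → Finset (Finset (Fin n))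
  | 0 => Sk
  | j + 1 => delSeq 𝔽 Sk V j \ suppδ 𝔽 (delSeq 𝔽 Sk V j) (V j)

/-- `C*_j := supp(δ^{k-1} V_j) ∖ ⋃_{i<j} supp(δ^{k-1} V_i)` (0-indexed). -/
noncomputable def Cstar (𝔽 : Type*) [Field 𝔽] {n : ℕ} (Sk : Finset (Finset (Fin n)))
    (V : ℕ → Finset (Fin n)) (j : ℕ) : Finset (Finset (Fin n)) :=
  suppδ 𝔽 Sk (V j) \ (Finset.range j).biUnion (fun i => suppδ 𝔽 Sk (V i))

/-- `(V_1,…,V_r)` (0-indexed: `V 0, …, V (r-1)`) is a basic linear sequence for `⟨S_k⟩`,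
where `r` is the rank of `Sim_k^n(S_k)`: each `V_j` is a `(k-1)`-subset of `[n]` and each
`C*_j` is a cocircuit of `Sim_k^n(S_k(Δ_{j-1}))`. -/
def BasicLinearSeq (𝔽 : Type*) [Field 𝔽] (n k : ℕ) (Sk : Finset (Finset (Fin n))) (r : ℕ)
    (V : ℕ → Finset (Fin n)) : Prop :=
  simRank 𝔽 n k Sk = r ∧ (∀ j < r, (V j).card = k - 1) ∧
    ∀ j < r, SimCocircuit 𝔽 n k (delSeq 𝔽 Sk V j) (Cstar 𝔽 Sk V j)

/-- `⟨S_k⟩` is D-perfect: there is a basic linear sequence `V_1,…,V_r` such that each `V_j`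
is simplicial in `Δ_{j-1}`. -/
def DPerfect (𝔽 : Type*) [Field 𝔽] (n k : ℕ) (Sk : Finset (Finset (Fin n))) : Prop :=
  ∃ V : ℕ → Finset (Fin n),
    BasicLinearSeq 𝔽 n k Sk (simRank 𝔽 n k Sk) V ∧
      ∀ j < simRank 𝔽 n k Sk, SimplicialFace k (delSeq 𝔽 Sk V j) (V j)

/-- A flat of `Sim_k^n(S_k)`: a closed subset of the ground set. -/
def SimFlat (𝔽 : Type*) [Field 𝔽] (n k : ℕ) (Sk X : Finset (Finset (Fin n))) : Prop :=
  X ⊆ Sk ∧ ∀ F ∈ Sk,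
    bvec 𝔽 n k F ∈ Submodule.span 𝔽 ((fun G => bvec 𝔽 n k G) '' (X : Set (Finset (Fin n)))) →
      F ∈ X

/-- A hyperplane of `Sim_k^n(S_k)`: a flat of rank one less than the rank of the matroid. -/
def SimHyperplane (𝔽 : Type*) [Field 𝔽] (n k : ℕ) (Sk H : Finset (Finset (Fin n))) : Prop :=
  SimFlat 𝔽 n k Sk H ∧ simRank 𝔽 n k H + 1 = simRank 𝔽 n k Sk

/-- A modular flat of `Sim_k^n(S_k)`:
`r(X) + r(Y) = r(X ∪ Y) + r(X ∩ Y)` for every flat `Y`. -/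
def ModularFlat (𝔽 : Type*) [Field 𝔽] (n k : ℕ) (Sk X : Finset (Finset (Fin n))) : Prop :=
  SimFlat 𝔽 n k Sk X ∧ ∀ Y, SimFlat 𝔽 n k Sk Y →
    simRank 𝔽 n k X + simRank 𝔽 n k Y = simRank 𝔽 n k (X ∪ Y) + simRank 𝔽 n k (X ∩ Y)

open scoped Classical in
/-- The closure of `X` in `Sim_k^n(S_k)`. -/
noncomputable def simClosure (𝔽 : Type*) [Field 𝔽] (n k : ℕ)
    (Sk X : Finset (Finset (Fin n))) : Finset (Finset (Fin n)) :=
  Sk.filter fun F =>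
    bvec 𝔽 n k F ∈ Submodule.span 𝔽 ((fun G => bvec 𝔽 n k G) '' (X : Set (Finset (Fin n))))

/-- `Sim_k^n(S_k)` is supersolvable: it admits a maximal chain of modular flats
`cl(∅) = X_0 ⊊ X_1 ⊊ ⋯ ⊊ X_r = S_k`, `r` the rank. -/
def Supersolvable (𝔽 : Type*) [Field 𝔽] (n k : ℕ) (Sk : Finset (Finset (Fin n))) : Prop :=
  ∃ X : ℕ → Finset (Finset (Fin n)),
    X 0 = simClosure 𝔽 n k Sk ∅ ∧ X (simRank 𝔽 n k Sk) = Sk ∧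
      (∀ i < simRank 𝔽 n k Sk, X i ⊂ X (i + 1)) ∧
      ∀ i ≤ simRank 𝔽 n k Sk, ModularFlat 𝔽 n k Sk (X i)

/-- `H` is a dense hyperplane of `Sim_k^n(ground)`: a hyperplane of the form
`ground ∖ supp(δ^{k-1} V)` for some `(k-1)`-subset `V` simplicial in `⟨ground⟩`. -/
def DenseHyp (𝔽 : Type*) [Field 𝔽] (n k : ℕ) (ground H : Finset (Finset (Fin n))) : Prop :=
  SimHyperplane 𝔽 n k ground H ∧
    ∃ V : Finset (Fin n), V.card = k - 1 ∧ SimplicialFace k ground V ∧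
      H = ground \ suppδ 𝔽 ground V

/-- `Sim_k^n(S_k)` is superdense: there is a chain `∅ = X_0 ⊊ X_1 ⊊ ⋯ ⊊ X_r = S_k` of flats
(`r` the rank) with each `X_i` a dense hyperplane of `Sim_k^n(X_{i+1})`. -/
def Superdense (𝔽 : Type*) [Field 𝔽] (n k : ℕ) (Sk : Finset (Finset (Fin n))) : Prop :=
  ∃ X : ℕ → Finset (Finset (Fin n)),
    X 0 = ∅ ∧ X (simRank 𝔽 n k Sk) = Sk ∧
      (∀ i ≤ simRank 𝔽 n k Sk, SimFlat 𝔽 n k Sk (X i)) ∧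
      (∀ i < simRank 𝔽 n k Sk, X i ⊂ X (i + 1)) ∧
      ∀ i < simRank 𝔽 n k Sk, DenseHyp 𝔽 n k (X (i + 1)) (X i)

/-- `Sim_k^n(S_k)` is triangulable over `𝔽`: the boundaries of the `(k+1)`-faces of `⟨S_k⟩`
span the circuit space `ker ∂_k`. -/
def Triangulable (𝔽 : Type*) [Field 𝔽] (n k : ℕ) (Sk : Finset (Finset (Fin n))) : Prop :=
  Submodule.span 𝔽
      {v : ↥Sk → 𝔽 | ∃ X : Finset (Fin n), X.card = k + 1 ∧ IsFace k Sk X ∧ v = pbdry 𝔽 Sk X}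
    = LinearMap.ker (bdryMap 𝔽 n k Sk)

/-- `Sim_k^n(S_k)` is strongly triangulable over `𝔽`: there are `(k+1)`-faces `X_1,…,X_{m'}`
of `⟨S_k⟩` whose boundaries span `ker ∂_k` and such that every circuit `C` has a
representing vector `C⃗` with support `C` which is a combination, with nonzero coefficients,
of boundaries `∂_{k+1} X_{i_j}` with `⋃_{F ∈ C} F = ⋃_j X_{i_j}`. -/
def StronglyTriangulable (𝔽 : Type*) [Field 𝔽] (n k : ℕ)
    (Sk : Finset (Finset (Fin n))) : Prop :=
  ∃ (m' : ℕ) (Xs : Fin m' → Finset (Fin n)),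
    (∀ i, (Xs i).card = k + 1 ∧ IsFace k Sk (Xs i)) ∧
    Submodule.span 𝔽 (Set.range fun i => pbdry 𝔽 Sk (Xs i)) = LinearMap.ker (bdryMap 𝔽 n k Sk) ∧
    ∀ C, SimCircuit 𝔽 n k Sk C →
      ∃ (s : ℕ) (idx : Fin s → Fin m') (a : Fin s → 𝔽) (Cv : ↥Sk → 𝔽),
        (∀ j, a j ≠ 0) ∧ suppFin Cv = C ∧
        Cv = ∑ j, a j • pbdry 𝔽 Sk (Xs (idx j)) ∧
        C.biUnion id = Finset.univ.biUnion fun j : Fin s => Xs (idx j)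

/-- The simple graph `([n], S_2)`. -/
def graphOf {n : ℕ} (S2 : Finset (Finset (Fin n))) : SimpleGraph (Fin n) where
  Adj u v := u ≠ v ∧ ({u, v} : Finset (Fin n)) ∈ S2
  symm := by
    constructor
    intro u v h
    exact ⟨h.1.symm, by rw [Finset.pair_comm]; exact h.2⟩
  loopless := by constructor; intro u h; exact h.1 rfl

/-- A simple graph is chordal if every cycle of length at least four has a chord, i.e. an
edge of the graph joining two non-consecutive vertices of the cycle. -/
def Chordal {α : Type*} (G : SimpleGraph α) : Prop :=
  ∀ (v : α) (w : G.Walk v v), w.IsCycle → 4 ≤ w.length →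
    ∃ u₁ u₂, u₁ ∈ w.support ∧ u₂ ∈ w.support ∧ G.Adj u₁ u₂ ∧ s(u₁, u₂) ∉ w.edges

/-!
Take a vertex `u`, a pair `A` and a `k`-set `B`, pairwise disjoint, and let `S_k` consist of the
`k`-subsets of `{u} ∪ A ∪ B` containing neither `A` nor `B`. The faces of `⟨S_k⟩` with at least
`k` elements are the subsets of the `(k+1)`-sets `({u} ∪ A ∪ B) ∖ {a, b}`, `a ∈ A`, `b ∈ B`; these
are the facets, each of them contains `u`, and a `(k-1)`-set `V` lies in one for every pair
`(a, b)` avoiding `V`, of which there are at least two. In characteristic two all incidence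
numbers are `0` or `1`. Every `F ∈ S_k` avoiding `u` spans the face `F ∪ {u}`, so coning over
`u` writes each cycle as a sum of boundaries of `(k+1)`-faces. The `k`-sets
`(A ∪ B) ∖ {a, b}` form a circuit whose union `A ∪ B` misses `u`, whereas any combination of
boundaries of `(k+1)`-faces covers `u`; hence `Sim_k^n(S_k)` is not strongly triangulable.
-/

section

variable {𝔽 : Type*} [Field 𝔽] [CharP 𝔽 2] {n k : ℕ}

theorem intCast_inc_eq_ite {F' F : Finset (Fin n)} (hcard : F'.card + 1 = F.card) :
    ((inc F' F : ℤ) : 𝔽) = if F' ⊆ F then 1 else 0 := by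
  have hfilter : F.filter (fun i => F' = F.erase i) = if F' ⊆ F then F \ F' else ∅ := by
    ext i
    split_ifs with h
    · simp only [mem_filter, mem_sdiff]
      refine ⟨fun ⟨hi, hF'⟩ => ⟨hi, hF' ▸ notMem_erase i F⟩, fun ⟨hi, hiF'⟩ => ⟨hi, ?_⟩⟩
      exact eq_of_subset_of_card_le (subset_erase.2 ⟨h, hiF'⟩)
        (by rw [card_erase_of_mem hi]; omega)
    · simp only [mem_filter, notMem_empty, iff_false, not_and]
      rintro - rfl
      exact h (erase_subset i F)
  have hcount : ((inc F' F : ℤ) : 𝔽) = (F.filter (fun i => F' = F.erase i)).card := by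
    simp only [inc, Int.cast_sum, Int.cast_ite, Int.cast_pow, Int.cast_neg, Int.cast_one,
      CharTwo.neg_eq, one_pow, Int.cast_zero, sum_boole]
  rw [hcount, hfilter]
  split_ifs with h
  · rw [card_sdiff_of_subset h, show F.card - F'.card = 1 by omega, Nat.cast_one]
  · rw [card_empty, Nat.cast_zero]

variable {Sk : Finset (Finset (Fin n))}

theorem bdryMap_apply_eq_sum_filter (hSk : ∀ F ∈ Sk, F.card = k) (hk : 1 ≤ k)
    (z : ↥Sk → 𝔽) (τ : Csets n (k - 1)) :
    bdryMap 𝔽 n k Sk z τ = ∑ F ∈ univ.filter (fun F : Sk => τ.1 ⊆ F.1), z F := by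
  simp only [bdryMap, Matrix.mulVecLin_apply, Matrix.mulVec, dotProduct, Matrix.of_apply]
  rw [sum_filter]
  refine sum_congr rfl fun F _ => ?_
  rw [intCast_inc_eq_ite (by rw [τ.2, hSk _ F.2]; omega), ite_mul, one_mul, zero_mul]

theorem pbdry_apply_eq_ite (hSk : ∀ F ∈ Sk, F.card = k) {X : Finset (Fin n)}
    (hX : X.card = k + 1) (F : ↥Sk) :
    pbdry 𝔽 Sk X F = if F.1 ⊆ X then 1 else 0 :=
  intCast_inc_eq_ite (by rw [hSk _ F.2, hX])

theorem sum_smul_bvec_apply {ι : Type*} (P : Finset ι) (g : ι → 𝔽) (f : ι → Finset (Fin n))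
    (hf : ∀ p ∈ P, (f p).card = k) (hk : 1 ≤ k) (τ : Csets n (k - 1)) :
    (∑ p ∈ P, g p • bvec 𝔽 n k (f p)) τ = ∑ p ∈ P.filter (fun p => τ.1 ⊆ f p), g p := by
  rw [Finset.sum_apply, sum_filter]
  refine sum_congr rfl fun p hp => ?_
  rw [Pi.smul_apply, bvec, intCast_inc_eq_ite (by rw [τ.2, hf p hp]; omega), smul_eq_mul,
    mul_ite, mul_one, mul_zero]

theorem bdryMap_pbdry (hSk : ∀ F ∈ Sk, F.card = k) (hk : 1 ≤ k) {X : Finset (Fin n)}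
    (hX : X.card = k + 1) (hXSk : ∀ F ⊆ X, F.card = k → F ∈ Sk) :
    bdryMap 𝔽 n k Sk (pbdry 𝔽 Sk X) = 0 := by
  funext τ
  rw [bdryMap_apply_eq_sum_filter hSk hk, sum_congr rfl fun F _ => pbdry_apply_eq_ite hSk hX F,
    sum_boole, filter_filter, Pi.zero_apply]
  by_cases hτX : τ.1 ⊆ X
  · -- the `k`-sets between `τ` and `X` are `τ ∪ {y}` for the two points `y ∈ X \ τ`
    have hcard : (univ.filter fun F : Sk => τ.1 ⊆ F.1 ∧ F.1 ⊆ X).card = (X \ τ.1).card := by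
      symm
      refine card_bij (fun y hy => ⟨insert y τ.1, hXSk _ (insert_subset (mem_sdiff.1 hy).1 hτX)
        (by rw [card_insert_of_notMem (mem_sdiff.1 hy).2, τ.2]; omega)⟩) ?_ ?_ ?_
      · intro y hy
        simp only [mem_filter, mem_univ, true_and]
        exact ⟨subset_insert _ _, insert_subset (mem_sdiff.1 hy).1 hτX⟩
      · intro y hy y' _ h
        exact (insert_inj (mem_sdiff.1 hy).2).1 (congrArg Subtype.val h)
      · rintro F hF
        obtain ⟨hτF, hFX⟩ := by simpa only [mem_filter, mem_univ, true_and] using hF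
        obtain ⟨y, hy⟩ : ∃ y, F.1 \ τ.1 = {y} := card_eq_one.1 (by
          rw [card_sdiff_of_subset hτF, hSk _ F.2, τ.2]; omega)
        have hyF : y ∈ F.1 \ τ.1 := hy ▸ mem_singleton_self y
        refine ⟨y, mem_sdiff.2 ⟨hFX (mem_sdiff.1 hyF).1, (mem_sdiff.1 hyF).2⟩, Subtype.ext ?_⟩
        show insert y τ.1 = F.1
        rw [insert_eq, ← hy, sdiff_union_of_subset hτF]
    rw [hcard, card_sdiff_of_subset hτX, hX, τ.2, show k + 1 - (k - 1) = 2 by omega,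
      Nat.cast_ofNat, CharTwo.two_eq_zero]
  · rw [filter_false_of_mem fun F _ h => hτX (h.1.trans h.2), card_empty, Nat.cast_zero]

theorem eq_sum_smul_pbdry_insert (hSk : ∀ F ∈ Sk, F.card = k) (hk : 1 ≤ k) (u : Fin n)
    {z : ↥Sk → 𝔽} (hz : bdryMap 𝔽 n k Sk z = 0) :
    z = ∑ F ∈ univ.filter (fun F : Sk => u ∉ F.1), z F • pbdry 𝔽 Sk (insert u F.1) := by
  funext G
  have hcoord : ∀ F : Sk, u ∉ F.1 →
      pbdry 𝔽 Sk (insert u F.1) G = if G.1.erase u ⊆ F.1 then 1 else 0 := fun F huF => by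
    rw [pbdry_apply_eq_ite hSk (by rw [card_insert_of_notMem huF, hSk _ F.2])]
    exact if_congr subset_insert_iff rfl rfl
  have heq : ∀ F : Sk, G.1 ⊆ F.1 → F = G := fun F h =>
    Subtype.ext (eq_of_subset_of_card_le h (by rw [hSk _ F.2, hSk _ G.2])).symm
  rw [Finset.sum_apply, sum_congr rfl fun F hF => by
    rw [Pi.smul_apply, smul_eq_mul, hcoord F (mem_filter.1 hF).2, mul_ite, mul_one, mul_zero],
    ← sum_filter, filter_filter]
  by_cases huG : u ∈ G.1
  · -- the cycle condition at `G \ {u}`: of the `k`-sets containing it, only `G` contains `u`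
    have hcycle := congrFun hz ⟨G.1.erase u, by rw [card_erase_of_mem huG, hSk _ G.2]⟩
    rw [bdryMap_apply_eq_sum_filter hSk hk,
      ← sum_filter_add_sum_filter_not _ (fun F : Sk => u ∉ F.1),
      filter_filter, filter_filter] at hcycle
    have hthrough : ∑ F ∈ univ.filter (fun F : Sk => G.1.erase u ⊆ F.1 ∧ ¬u ∉ F.1), z F = z G :=
      sum_eq_single_of_mem G (by simp [huG, erase_subset]) fun F hF hne => absurd (heq F (by
        simp only [mem_filter, mem_univ, true_and, not_not] at hF
        rw [← insert_erase huG]; exact insert_subset hF.2 hF.1)) hne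
    rw [hthrough, Pi.zero_apply, CharTwo.add_eq_zero] at hcycle
    simp only [and_comm] at hcycle ⊢
    exact hcycle.symm
  · rw [erase_eq_of_notMem huG, sum_eq_single_of_mem G (by simp [huG])
      fun F hF hne => absurd (heq F (mem_filter.1 hF).2.2) hne]

theorem triangulable_of_cone (hSk : ∀ F ∈ Sk, F.card = k) (hk : 1 ≤ k) (u : Fin n)
    (hcone : ∀ F ∈ Sk, u ∉ F → ∀ G ⊆ insert u F, G.card = k → G ∈ Sk) :
    Triangulable 𝔽 n k Sk := by
  refine le_antisymm (Submodule.span_le.2 ?_) fun z hz => ?_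
  · rintro _ ⟨X, hX, hXface, rfl⟩
    exact bdryMap_pbdry hSk hk hX (hXface.resolve_left (by omega))
  · rw [eq_sum_smul_pbdry_insert hSk hk u (LinearMap.mem_ker.1 hz)]
    refine Submodule.sum_mem _ fun F hF => Submodule.smul_mem _ _ (Submodule.subset_span ?_)
    have huF := (mem_filter.1 hF).2
    exact ⟨insert u F.1, by rw [card_insert_of_notMem huF, hSk _ F.2],
      Or.inr (hcone F.1 F.2 huF), rfl⟩

end

theorem not_stronglyTriangulable_of_circuit {𝔽 : Type*} [Field 𝔽] {n k : ℕ}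
    {Sk C : Finset (Finset (Fin n))} {u : Fin n}
    (hu : ∀ X : Finset (Fin n), X.card = k + 1 → IsFace k Sk X → u ∈ X)
    (hC : SimCircuit 𝔽 n k Sk C) (huC : ∀ F ∈ C, u ∉ F) :
    ¬ StronglyTriangulable 𝔽 n k Sk := by
  rintro ⟨m', Xs, hXs, -, hcirc⟩
  obtain ⟨s, idx, a, Cv, -, hsupp, hCv, hunion⟩ := hcirc C hC
  have hC₀ : C ≠ ∅ := by
    rintro rfl
    exact hC.2.1 linearIndependent_empty_type
  cases s with
  | zero =>
    apply hC₀
    rw [← hsupp, hCv]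
    simp [suppFin]
  | succ s =>
    have huX : u ∈ (univ : Finset (Fin (s + 1))).biUnion fun j => Xs (idx j) :=
      mem_biUnion.2 ⟨0, mem_univ _, hu _ (hXs _).1 (hXs _).2⟩
    obtain ⟨F, hF, huF⟩ := mem_biUnion.1 (hunion ▸ huX)
    exact huC F hF huF

theorem subset_sdiff_pair_iff {α : Type*} [DecidableEq α] {X S : Finset α} {a b : α} :
    X ⊆ S \ {a, b} ↔ X ⊆ S ∧ a ∉ X ∧ b ∉ X := by
  rw [subset_sdiff, disjoint_insert_right, disjoint_singleton_right]

namespace TwoBlock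

variable {n k : ℕ} {u : Fin n} {A B : Finset (Fin n)}

def family (k : ℕ) (u : Fin n) (A B : Finset (Fin n)) : Finset (Finset (Fin n)) :=
  ((insert u (A ∪ B)).powersetCard k).filter fun F => ¬A ⊆ F ∧ ¬B ⊆ F

def cells (A B : Finset (Fin n)) : Finset (Finset (Fin n)) :=
  (A ×ˢ B).image fun p => (A ∪ B) \ {p.1, p.2}

theorem mem_family {F : Finset (Fin n)} :
    F ∈ family k u A B ↔ F ⊆ insert u (A ∪ B) ∧ F.card = k ∧ ¬A ⊆ F ∧ ¬B ⊆ F := by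
  simp only [family, mem_filter, mem_powersetCard, and_assoc]

theorem mem_family_of_subset_sdiff_pair {a b : Fin n} (ha : a ∈ A) (hb : b ∈ B)
    {F : Finset (Fin n)} (hF : F ⊆ insert u (A ∪ B) \ {a, b}) (hFk : F.card = k) :
    F ∈ family k u A B := by
  obtain ⟨hFg, haF, hbF⟩ := subset_sdiff_pair_iff.1 hF
  exact mem_family.2 ⟨hFg, hFk, fun h => haF (h ha), fun h => hbF (h hb)⟩

theorem isFace_family_iff (hk : 1 ≤ k) (hA : A.card ≤ k) (hB : B.card ≤ k)
    {X : Finset (Fin n)} (hX : k ≤ X.card) :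
    IsFace k (family k u A B) X ↔ ∃ a ∈ A, ∃ b ∈ B, X ⊆ insert u (A ∪ B) \ {a, b} := by
  constructor
  · rintro (hlt | hface)
    · omega
    have hground : X ⊆ insert u (A ∪ B) := fun x hx => by
      obtain ⟨F, hxF, hFX, hF⟩ := exists_subsuperset_card_eq (singleton_subset_iff.2 hx)
        (by rwa [card_singleton]) hX
      exact (mem_family.1 (hface F hFX hF)).1 (hxF (mem_singleton_self x))
    have hmiss : ∀ S : Finset (Fin n), S.card ≤ k → (∀ F ∈ family k u A B, ¬S ⊆ F) →
        ∃ s ∈ S, s ∉ X := fun S hS hSfam => by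
      by_contra! hSX
      obtain ⟨F, hSF, hFX, hF⟩ := exists_subsuperset_card_eq hSX hS hX
      exact hSfam F (hface F hFX hF) hSF
    obtain ⟨a, ha, haX⟩ := hmiss A hA fun F hF => (mem_family.1 hF).2.2.1
    obtain ⟨b, hb, hbX⟩ := hmiss B hB fun F hF => (mem_family.1 hF).2.2.2
    exact ⟨a, ha, b, hb, subset_sdiff_pair_iff.2 ⟨hground, haX, hbX⟩⟩
  · rintro ⟨a, ha, b, hb, hXab⟩
    exact Or.inr fun F hFX hF => mem_family_of_subset_sdiff_pair ha hb (hFX.trans hXab) hF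

theorem isFace_sdiff_pair {a b : Fin n} (ha : a ∈ A) (hb : b ∈ B) :
    IsFace k (family k u A B) (insert u (A ∪ B) \ {a, b}) :=
  Or.inr fun _ hF hFk => mem_family_of_subset_sdiff_pair ha hb hF hFk

theorem card_sdiff_pair (hAB : Disjoint A B) {S : Finset (Fin n)} (hS : A ∪ B ⊆ S)
    {a b : Fin n} (ha : a ∈ A) (hb : b ∈ B) : (S \ {a, b}).card = S.card - 2 := by
  rw [card_sdiff_of_subset (insert_subset (hS (mem_union_left _ ha))
      (singleton_subset_iff.2 (hS (mem_union_right _ hb)))),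
    card_pair fun h : a = b => disjoint_left.1 hAB ha (h ▸ hb)]

theorem card_insert_union_sdiff_pair (huA : u ∉ A) (huB : u ∉ B) (hAB : Disjoint A B)
    (hA : A.card = 2) (hB : B.card = k) {a b : Fin n} (ha : a ∈ A) (hb : b ∈ B) :
    (insert u (A ∪ B) \ {a, b}).card = k + 1 := by
  rw [card_sdiff_pair hAB (subset_insert _ _) ha hb, card_insert_of_notMem (by simp [huA, huB]),
    card_union_of_disjoint hAB, hA, hB]
  omega

theorem sdiff_pair_injOn (hAB : Disjoint A B) {S : Finset (Fin n)} (hS : A ∪ B ⊆ S) :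
    Set.InjOn (fun p : Fin n × Fin n => S \ {p.1, p.2}) (A ×ˢ B : Finset _) := by
  rintro ⟨a, b⟩ hp ⟨a', b'⟩ hq h
  simp only [coe_product, Set.mem_prod, mem_coe] at hp hq
  have hsub : ∀ {x y : Fin n}, x ∈ A → y ∈ B → {x, y} ⊆ S := fun hx hy =>
    insert_subset (hS (mem_union_left _ hx)) (singleton_subset_iff.2 (hS (mem_union_right _ hy)))
  have hpair : ({a, b} : Finset (Fin n)) = {a', b'} := by
    rw [← Finset.sdiff_sdiff_eq_self (hsub hp.1 hp.2),
      ← Finset.sdiff_sdiff_eq_self (hsub hq.1 hq.2)]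
    exact congrArg (S \ ·) h
  have ha : a ∈ ({a', b'} : Finset (Fin n)) := hpair ▸ mem_insert_self a {b}
  have hb : b ∈ ({a', b'} : Finset (Fin n)) := hpair ▸ mem_insert_of_mem (mem_singleton_self b)
  simp only [mem_insert, mem_singleton] at ha hb
  obtain rfl := ha.resolve_right fun h => disjoint_left.1 hAB hp.1 (h ▸ hq.2)
  obtain rfl := hb.resolve_left fun h => disjoint_left.1 hAB hq.1 (h ▸ hp.2)
  rfl

theorem card_le_of_isFace (huA : u ∉ A) (huB : u ∉ B) (hAB : Disjoint A B) (hA : A.card = 2)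
    (hB : B.card = k) (hk : 2 ≤ k) {X : Finset (Fin n)} (hX : IsFace k (family k u A B) X) :
    X.card ≤ k + 1 := by
  by_contra! hlt
  obtain ⟨a, ha, b, hb, hXab⟩ := (isFace_family_iff (by omega) (by omega) hB.le (by omega)).1 hX
  have := card_le_card hXab
  rw [card_insert_union_sdiff_pair huA huB hAB hA hB ha hb] at this
  omega

theorem isFacet_sdiff_pair (huA : u ∉ A) (huB : u ∉ B) (hAB : Disjoint A B) (hA : A.card = 2)
    (hB : B.card = k) (hk : 2 ≤ k) {a b : Fin n} (ha : a ∈ A) (hb : b ∈ B) :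
    IsFacet k (family k u A B) (insert u (A ∪ B) \ {a, b}) := by
  refine ⟨isFace_sdiff_pair ha hb, fun Y hY hsub => eq_of_subset_of_card_le hsub ?_⟩
  rw [card_insert_union_sdiff_pair huA huB hAB hA hB ha hb]
  exact card_le_of_isFace huA huB hAB hA hB hk hY

theorem mem_of_isFace (huA : u ∉ A) (huB : u ∉ B) (hAB : Disjoint A B) (hA : A.card = 2)
    (hB : B.card = k) (hk : 2 ≤ k) {X : Finset (Fin n)} (hX : X.card = k + 1)
    (hface : IsFace k (family k u A B) X) : u ∈ X := by
  obtain ⟨a, ha, b, hb, hXab⟩ := (isFace_family_iff (by omega) (by omega) hB.le (by omega)).1 hface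
  have hXeq : X = insert u (A ∪ B) \ {a, b} := eq_of_subset_of_card_le hXab
    (by rw [card_insert_union_sdiff_pair huA huB hAB hA hB ha hb, hX])
  rw [hXeq, mem_sdiff, mem_insert (s := {b}), mem_singleton, not_or]
  exact ⟨mem_insert_self _ _, fun h => huA (h ▸ ha), fun h => huB (h ▸ hb)⟩

theorem not_simplicialFace (huA : u ∉ A) (huB : u ∉ B) (hAB : Disjoint A B) (hA : A.card = 2)
    (hB : B.card = k) (hk : 2 ≤ k) {V : Finset (Fin n)} (hV : V.card = k - 1) :
    ¬ SimplicialFace k (family k u A B) V := by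
  rintro ⟨X, ⟨hXfacet, hVX⟩, huniq⟩
  obtain ⟨a, ha, b, hb, hXab⟩ := (isFace_family_iff (by omega) (by omega) hB.le
    (by have := card_lt_card hVX; omega)).1 hXfacet.1
  have hX : X = insert u (A ∪ B) \ {a, b} := hXfacet.2 _ (isFace_sdiff_pair ha hb) hXab
  obtain ⟨hVg, haV, hbV⟩ := subset_sdiff_pair_iff.1 (hVX.1.trans hXab)
  -- `V` misses three points of `A ∪ B`, at least one in each block, so two pairs avoid `V`
  have htwo : 1 < ((A \ V) ×ˢ (B \ V)).card := by
    have hAV : 0 < (A \ V).card := card_pos.2 ⟨a, mem_sdiff.2 ⟨ha, haV⟩⟩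
    have hBV : 0 < (B \ V).card := card_pos.2 ⟨b, mem_sdiff.2 ⟨hb, hbV⟩⟩
    have hsum : (A ∪ B).card - V.card ≤ (A \ V).card + (B \ V).card :=
      (le_card_sdiff V (A ∪ B)).trans (union_sdiff_distrib A B V ▸ card_union_le _ _)
    rw [card_union_of_disjoint hAB, hA, hB, hV] at hsum
    rw [card_product]
    nlinarith [show 3 ≤ (A \ V).card + (B \ V).card by omega]
  obtain ⟨⟨a', b'⟩, hp, hne⟩ := exists_mem_ne htwo (a, b)
  simp only [mem_product, mem_sdiff] at hp
  obtain ⟨⟨ha', ha'V⟩, hb', hb'V⟩ := hp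
  have hVY : V ⊂ insert u (A ∪ B) \ {a', b'} := by
    refine Finset.ssubset_iff_subset_ne.2 ⟨subset_sdiff_pair_iff.2 ⟨hVg, ha'V, hb'V⟩, fun h => ?_⟩
    have := congrArg card h
    rw [card_insert_union_sdiff_pair huA huB hAB hA hB ha' hb'] at this
    omega
  have hY := huniq _ ⟨isFacet_sdiff_pair huA huB hAB hA hB hk ha' hb', hVY⟩
  rw [hX] at hY
  exact hne (sdiff_pair_injOn hAB (subset_insert _ _) (by simp [ha', hb']) (by simp [ha, hb]) hY)

theorem filter_subset_cell {τ : Finset (Fin n)} (hτ : τ ⊆ A ∪ B) :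
    (A ×ˢ B).filter (fun p => τ ⊆ (A ∪ B) \ {p.1, p.2}) = (A \ τ) ×ˢ (B \ τ) := by
  ext ⟨a, b⟩
  simp only [mem_filter, mem_product, mem_sdiff, subset_sdiff_pair_iff, hτ, true_and]
  tauto

theorem card_cell (hAB : Disjoint A B) (hA : A.card = 2) (hB : B.card = k) {a b : Fin n}
    (ha : a ∈ A) (hb : b ∈ B) : ((A ∪ B) \ {a, b}).card = k := by
  rw [card_sdiff_pair hAB subset_rfl ha hb, card_union_of_disjoint hAB, hA, hB]
  omega

theorem cells_subset_family (hAB : Disjoint A B) (hA : A.card = 2) (hB : B.card = k) :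
    cells A B ⊆ family k u A B := by
  intro F hF
  obtain ⟨⟨a, b⟩, hp, rfl⟩ := mem_image.1 hF
  obtain ⟨ha, hb⟩ := mem_product.1 hp
  exact mem_family_of_subset_sdiff_pair ha hb (sdiff_subset_sdiff (subset_insert _ _) subset_rfl)
    (card_cell hAB hA hB ha hb)

section

variable {𝔽 : Type*} [Field 𝔽] [CharP 𝔽 2]

theorem eq_of_sum_smul_bvec_cell_eq_zero (hAB : Disjoint A B) (hA : A.card = 2)
    (hB : B.card = k) (hk : 1 ≤ k) {g : Fin n × Fin n → 𝔽}
    (hg : ∑ p ∈ A ×ˢ B, g p • bvec 𝔽 n k ((A ∪ B) \ {p.1, p.2}) = 0) :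
    ∀ p ∈ A ×ˢ B, ∀ q ∈ A ×ˢ B, g p = g q := by
  -- the coordinate of `∂ g` at `(A ∪ B) \ S`, for a triple `S`
  have htriple : ∀ S ⊆ A ∪ B, S.card = 3 → ∑ p ∈ (A ∩ S) ×ˢ (B ∩ S), g p = 0 := by
    intro S hS hS3
    have hτ : ((A ∪ B) \ S).card = k - 1 := by
      rw [card_sdiff_of_subset hS, card_union_of_disjoint hAB, hA, hB, hS3]; omega
    have h := congrFun hg ⟨_, hτ⟩
    rw [sum_smul_bvec_apply _ _ _ (fun p hp => card_cell hAB hA hB (mem_product.1 hp).1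
      (mem_product.1 hp).2) hk, filter_subset_cell sdiff_subset, Pi.zero_apply] at h
    convert h using 2
    congr 1 <;> ext x <;> simp +contextual
  have hne : ∀ {x y : Fin n}, x ∈ A → y ∈ B → x ≠ y := fun hx hy h =>
    disjoint_left.1 hAB hx (h ▸ hy)
  have hrow : ∀ a ∈ A, ∀ b ∈ B, ∀ b' ∈ B, g (a, b) = g (a, b') := by
    intro a ha b hb b' hb'
    rcases eq_or_ne b b' with rfl | hbb'
    · rfl
    have h := htriple {a, b, b'} (by simp [insert_subset_iff, ha, hb, hb'])
      (card_eq_three.2 ⟨a, b, b', hne ha hb, hne ha hb', hbb', rfl⟩)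
    rw [inter_insert_of_mem ha, inter_insert_of_notMem (disjoint_right.1 hAB hb),
      inter_singleton_of_notMem (disjoint_right.1 hAB hb'), inter_insert_of_notMem
      (disjoint_left.1 hAB ha), inter_insert_of_mem hb, inter_singleton_of_mem hb',
      insert_empty, singleton_product, sum_map, sum_pair hbb'] at h
    exact CharTwo.add_eq_zero.1 h
  have hcol : ∀ a ∈ A, ∀ a' ∈ A, ∀ b ∈ B, g (a, b) = g (a', b) := by
    intro a ha a' ha' b hb
    rcases eq_or_ne a a' with rfl | haa'
    · rfl
    have h := htriple {a, a', b} (by simp [insert_subset_iff, ha, ha', hb])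
      (card_eq_three.2 ⟨a, a', b, haa', hne ha hb, hne ha' hb, rfl⟩)
    rw [inter_insert_of_mem ha, inter_insert_of_mem ha',
      inter_singleton_of_notMem (disjoint_right.1 hAB hb), inter_insert_of_notMem
      (disjoint_left.1 hAB ha), inter_insert_of_notMem (disjoint_left.1 hAB ha'),
      inter_singleton_of_mem hb, insert_empty, product_singleton, sum_map, sum_pair haa'] at h
    exact CharTwo.add_eq_zero.1 h
  rintro ⟨a, b⟩ hp ⟨a', b'⟩ hq
  simp only [mem_product] at hp hq
  exact (hrow a hp.1 b hp.2 b' hq.2).trans (hcol a hp.1 a' hq.1 b' hq.2)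

theorem not_linearIndependent_cells (hAB : Disjoint A B) (hA : A.card = 2) (hB : B.card = k)
    (hk : 1 ≤ k) : ¬ LinearIndependent 𝔽 (fun F : cells A B => bvec 𝔽 n k F.1) := by
  change ¬ LinearIndepOn 𝔽 (bvec 𝔽 n k) (cells A B : Set (Finset (Fin n)))
  rw [linearIndepOn_finset_iff]
  intro hindep
  obtain ⟨a, ha⟩ : A.Nonempty := card_pos.1 (by omega)
  obtain ⟨b, hb⟩ : B.Nonempty := card_pos.1 (by omega)
  refine one_ne_zero (hindep (fun _ => 1) ?_ _
    (mem_image_of_mem _ (show (a, b) ∈ A ×ˢ B from mem_product.2 ⟨ha, hb⟩)))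
  rw [cells, sum_image (sdiff_pair_injOn hAB subset_rfl)]
  funext τ
  rw [sum_smul_bvec_apply _ _ _ (fun p hp => card_cell hAB hA hB (mem_product.1 hp).1
    (mem_product.1 hp).2) hk, sum_const, nsmul_eq_mul, mul_one, Pi.zero_apply]
  by_cases hτ : τ.1 ⊆ A ∪ B
  · -- the two factors of `|A \ τ| * |B \ τ|` add up to `|(A ∪ B) \ τ| = 3`
    have hsum : (A \ τ.1).card + (B \ τ.1).card = 3 := by
      rw [← card_union_of_disjoint (hAB.mono sdiff_subset sdiff_subset), ← union_sdiff_distrib,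
        card_sdiff_of_subset hτ, card_union_of_disjoint hAB, hA, hB, τ.2]
      omega
    rw [filter_subset_cell hτ, card_product, CharP.cast_eq_zero_iff 𝔽 2]
    rcases (by omega : 2 ∣ (A \ τ.1).card ∨ 2 ∣ (B \ τ.1).card) with h | h
    · exact h.mul_right _
    · exact h.mul_left _
  · rw [filter_false_of_mem fun p _ h => hτ (h.trans sdiff_subset), card_empty, Nat.cast_zero]

theorem linearIndependent_of_ssubset_cells (hAB : Disjoint A B) (hA : A.card = 2)
    (hB : B.card = k) (hk : 1 ≤ k) {C : Finset (Finset (Fin n))} (hC : C ⊂ cells A B) :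
    LinearIndependent 𝔽 (fun F : C => bvec 𝔽 n k F.1) := by
  change LinearIndepOn 𝔽 (bvec 𝔽 n k) (C : Set (Finset (Fin n)))
  rw [linearIndepOn_finset_iff]
  intro f hf F hF
  set f' : Finset (Fin n) → 𝔽 := fun F => if F ∈ C then f F else 0 with hf'
  have hsum : ∑ p ∈ A ×ˢ B, f' ((A ∪ B) \ {p.1, p.2}) • bvec 𝔽 n k ((A ∪ B) \ {p.1, p.2}) = 0 := by
    rw [← sum_image (f := fun F => f' F • bvec 𝔽 n k F) (sdiff_pair_injOn hAB subset_rfl)]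
    change ∑ F ∈ cells A B, f' F • bvec 𝔽 n k F = 0
    simp only [hf', ite_smul, zero_smul]
    rwa [sum_ite_mem, inter_eq_right.2 hC.1]
  have hconst := eq_of_sum_smul_bvec_cell_eq_zero hAB hA hB hk hsum
  -- the coefficients are constant on the cells and vanish on a cell outside `C`
  obtain ⟨F₁, hF₁, hF₁C⟩ := exists_of_ssubset hC
  obtain ⟨p₁, hp₁, rfl⟩ := mem_image.1 hF₁
  obtain ⟨p, hp, rfl⟩ := mem_image.1 (hC.1 hF)
  simpa [hf', hF, hF₁C] using hconst p hp p₁ hp₁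

theorem simCircuit_cells (hAB : Disjoint A B) (hA : A.card = 2) (hB : B.card = k) (hk : 1 ≤ k) :
    SimCircuit 𝔽 n k (family k u A B) (cells A B) :=
  ⟨cells_subset_family hAB hA hB, not_linearIndependent_cells hAB hA hB hk,
    fun _ hC => linearIndependent_of_ssubset_cells hAB hA hB hk hC⟩

theorem triangulable_family (huA : u ∉ A) (huB : u ∉ B) (hk : 1 ≤ k) :
    Triangulable 𝔽 n k (family k u A B) := by
  refine triangulable_of_cone (fun F hF => (mem_family.1 hF).2.1) hk u ?_
  intro F hF huF G hG hGk
  obtain ⟨hFg, -, hAF, hBF⟩ := mem_family.1 hF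
  obtain ⟨a, ha, haF⟩ := not_subset.1 hAF
  obtain ⟨b, hb, hbF⟩ := not_subset.1 hBF
  refine mem_family_of_subset_sdiff_pair ha hb (hG.trans (subset_sdiff_pair_iff.2 ?_)) hGk
  simp only [mem_insert, not_or]
  exact ⟨insert_subset (mem_insert_self _ _) hFg, ⟨fun h => huA (h ▸ ha), haF⟩,
    fun h => huB (h ▸ hb), hbF⟩

theorem not_stronglyTriangulable_family (huA : u ∉ A) (huB : u ∉ B) (hAB : Disjoint A B)
    (hA : A.card = 2) (hB : B.card = k) (hk : 2 ≤ k) :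
    ¬ StronglyTriangulable 𝔽 n k (family k u A B) :=
  not_stronglyTriangulable_of_circuit (fun _ => mem_of_isFace huA huB hAB hA hB hk)
    (simCircuit_cells hAB hA hB (by omega)) fun F hF => by
      obtain ⟨p, -, rfl⟩ := mem_image.1 hF
      exact fun h => (mem_union.1 (mem_sdiff.1 h).1).elim huA huB

end

end TwoBlock

theorem exists_vertex_disjoint_pair_block {n k : ℕ} (hkn : k + 3 ≤ n) :
    ∃ (u : Fin n) (A B : Finset (Fin n)),
      u ∉ A ∧ u ∉ B ∧ Disjoint A B ∧ A.card = 2 ∧ B.card = k := by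
  refine ⟨⟨0, by omega⟩, Ioc ⟨0, by omega⟩ ⟨2, by omega⟩, Ioc ⟨2, by omega⟩ ⟨k + 2, by omega⟩,
    by simp, by simp [Fin.le_def], ?_, by simp, by simp⟩
  rw [disjoint_left]
  intro x hx hx'
  simp only [mem_Ioc, Fin.le_def, Fin.lt_def] at hx hx'
  omega

theorem stmt12 (𝔽 : Type*) [Field 𝔽] [CharP 𝔽 2] (n k : ℕ) (hk : 2 ≤ k) (hkn : k + 3 ≤ n) :
    ∃ Sk : Finset (Finset (Fin n)), (∀ F ∈ Sk, F.card = k) ∧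
      Triangulable 𝔽 n k Sk ∧ ¬ StronglyTriangulable 𝔽 n k Sk ∧
      ∀ V : Finset (Fin n), V.card = k - 1 → ¬ SimplicialFace k Sk V := by
  obtain ⟨u, A, B, huA, huB, hAB, hA, hB⟩ := exists_vertex_disjoint_pair_block hkn
  exact ⟨TwoBlock.family k u A B, fun F hF => (TwoBlock.mem_family.1 hF).2.1,
    TwoBlock.triangulable_family huA huB (by omega),
    TwoBlock.not_stronglyTriangulable_family huA huB hAB hA hB hk,
    fun V hV => TwoBlock.not_simplicialFace huA huB hAB hA hB hk hV⟩
end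

section
/- (Crapo–Rota duality) Let n and k be integers with 2 ≤ k ≤ n − 2 and let 𝔽 be a field. Then the dual matroid of the full simplicial matroid Sim_k^n(C([n],k)) over 𝔽 is isomorphic to the full simplicial matroid Sim_{n−k}^n(C([n],n−k)) over 𝔽, via the bijection X ↦ [n] ∖ X between C([n],k) and C([n],n−k). -/
/-!
Common definitions for simplicial matroids, following Cordovil–Lemos–Linhares Sales,
"Dirac's theorem on simplicial matroids".

We model `[n] = {1,…,n}` by `Fin n`, and a subset of `[n]` by a `Finset (Fin n)`.
A family `S_k ⊆ C([n],k)` is a `Finset (Finset (Fin n))` (all of whose members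
have cardinality `k`, which is imposed by hypotheses in the theorems).
-/

open Finset

/-!
Write `∂` and `δ` for the boundary and coboundary of the full simplex on `[n]`. The family
`C([n],k) ∖ X` spans as much as `C([n],k)` iff every linear functional killing `∂F` for all
`F ∉ X` kills every `∂F`. The functions `F ↦ φ(∂F)` are exactly the coboundaries `δψ`, and since
the simplex is a cone these are exactly the cocycles; so the left-hand side says that `X` supports
no nonzero cocycle. On the right, the sets `[n] ∖ F`, `F ∈ X`, are independent iff no nonzero
cycle is supported on them, and complementation, with the sign rule
`[Vᶜ : Fᶜ] = (-1)^(ΣV + ΣF) [F : V]`, turns such cycles into cocycles supported on `X`.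
-/

def incSign {n : ℕ} (F : Finset (Fin n)) (i : Fin n) : ℤ :=
  (-1) ^ #{j ∈ F | j ≤ i}

def sumSign {n : ℕ} (S : Finset (Fin n)) : ℤ :=
  (-1) ^ ∑ j ∈ S, (j : ℕ)

section Incidence

variable {n : ℕ}

theorem inc_eq_sum (F' F : Finset (Fin n)) :
    inc F' F = ∑ i ∈ F, if F' = F.erase i then incSign F i else 0 :=
  rfl

theorem inc_erase {F : Finset (Fin n)} {i : Fin n} (hi : i ∈ F) :
    inc (F.erase i) F = incSign F i := by
  rw [inc_eq_sum, sum_eq_single i (fun j hj hji => if_neg fun h => ?_) (absurd hi), if_pos rfl]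
  exact notMem_erase j F (h ▸ mem_erase.mpr ⟨hji, hj⟩)

theorem inc_eq_zero {F' F : Finset (Fin n)} (h : ∀ i ∈ F, F' ≠ F.erase i) : inc F' F = 0 :=
  sum_eq_zero fun i hi => if_neg (h i hi)

theorem inc_eq_zero_of_card_ne {F' F : Finset (Fin n)} (h : #F' + 1 ≠ #F) : inc F' F = 0 :=
  inc_eq_zero fun i hi he => h (by rw [he, card_erase_add_one hi])

theorem incSign_mul_self (F : Finset (Fin n)) (i : Fin n) : incSign F i * incSign F i = 1 := by
  rw [incSign, ← pow_add, ← two_mul, pow_mul]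
  norm_num

theorem incSign_erase_of_lt {V : Finset (Fin n)} {i j : Fin n} (h : i < j) :
    incSign (V.erase j) i = incSign V i := by
  rw [incSign, incSign, filter_erase, erase_eq_of_notMem]
  simp [h.not_ge]

theorem incSign_erase_of_gt {V : Finset (Fin n)} {i j : Fin n} (hj : j ∈ V) (h : j < i) :
    incSign (V.erase j) i = -incSign V i := by
  rw [incSign, incSign, filter_erase, ← card_erase_add_one (mem_filter.mpr ⟨hj, h.le⟩), pow_succ]
  ring

theorem incSign_mul_incSign_erase {V : Finset (Fin n)} {a b : Fin n} (hab : a ≠ b)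
    (ha : a ∈ V) (hb : b ∈ V) :
    incSign V a * incSign (V.erase a) b = -(incSign V b * incSign (V.erase b) a) := by
  rcases hab.lt_or_gt with h | h
  · rw [incSign_erase_of_gt ha h, incSign_erase_of_lt h]
    ring
  · rw [incSign_erase_of_lt h, incSign_erase_of_gt hb h]
    ring

theorem incSign_erase_mul_incSign_erase {V : Finset (Fin n)} {a b : Fin n} (hab : a ≠ b)
    (ha : a ∈ V) (hb : b ∈ V) :
    incSign (V.erase a) b * incSign (V.erase b) a = -(incSign V a * incSign V b) := by
  linear_combination (incSign V a * incSign (V.erase b) a) * incSign_mul_incSign_erase hab ha hb -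
    (incSign (V.erase a) b * incSign (V.erase b) a) * incSign_mul_self V a -
    (incSign V a * incSign V b) * incSign_mul_self (V.erase b) a

theorem sumSign_mul_self (S : Finset (Fin n)) : sumSign S * sumSign S = 1 := by
  rw [sumSign, ← pow_add, ← two_mul, pow_mul]
  norm_num

theorem card_filter_le_add_card_compl_filter_le (F : Finset (Fin n)) (i : Fin n) :
    #{j ∈ F | j ≤ i} + #{j ∈ Fᶜ | j ≤ i} = i + 1 := by
  rw [← card_union_of_disjoint (disjoint_filter_filter disjoint_compl_right), ← filter_union,
    union_compl, filter_ge_eq_Iic, Fin.card_Iic]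

-- `(V.erase i)ᶜ` and `V` together contain every `j ≤ i` once, except `i`, which lies in both.
theorem incSign_compl_erase_mul_incSign {V : Finset (Fin n)} {i : Fin n} (hi : i ∈ V) :
    incSign (V.erase i)ᶜ i * incSign V i = (-1) ^ (i : ℕ) := by
  have hcount := card_filter_le_add_card_compl_filter_le (V.erase i) i
  have hV : #{j ∈ V.erase i | j ≤ i} + 1 = #{j ∈ V | j ≤ i} := by
    rw [filter_erase]
    exact card_erase_add_one (mem_filter.mpr ⟨hi, le_rfl⟩)
  rw [incSign, incSign, ← pow_add,
    show #{j ∈ (V.erase i)ᶜ | j ≤ i} + #{j ∈ V | j ≤ i} = (i : ℕ) + 2 by omega, pow_add]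
  norm_num

theorem inc_compl_compl (F V : Finset (Fin n)) :
    inc Vᶜ Fᶜ = sumSign V * sumSign F * inc F V := by
  by_cases hFV : ∃ i ∈ V, F = V.erase i
  · obtain ⟨i, hi, rfl⟩ := hFV
    have hVc : Vᶜ = (V.erase i)ᶜ.erase i := by
      rw [compl_erase, erase_insert (notMem_compl.mpr hi)]
    have hsum : sumSign V = (-1) ^ (i : ℕ) * sumSign (V.erase i) := by
      rw [sumSign, sumSign, ← add_sum_erase V _ hi, pow_add]
    rw [hVc, inc_erase (mem_compl.mpr (notMem_erase i V)), inc_erase hi, hsum]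
    linear_combination (-incSign (V.erase i)ᶜ i) * incSign_mul_self V i +
      incSign V i * incSign_compl_erase_mul_incSign hi +
      (-(-1) ^ (i : ℕ) * incSign V i) * sumSign_mul_self (V.erase i)
  · push Not at hFV
    rw [inc_eq_zero hFV, mul_zero]
    refine inc_eq_zero fun i hi hVc => ?_
    have hV : V = insert i F := by rw [← compl_compl V, hVc, compl_erase, compl_compl]
    exact hFV i (hV ▸ mem_insert_self i F) (by rw [hV, erase_insert (mem_compl.mp hi)])

end Incidence

section Cochain

variable {R : Type*} [CommRing R] {n : ℕ}

def coboundary (f : Finset (Fin n) → R) (V : Finset (Fin n)) : R :=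
  ∑ F, (inc F V : R) * f F

def boundary (f : Finset (Fin n) → R) (W : Finset (Fin n)) : R :=
  ∑ G, (inc W G : R) * f G

def cone (z : Fin n) (f : Finset (Fin n) → R) (U : Finset (Fin n)) : R :=
  (inc U (insert z U) : R) * f (insert z U)

def hodge (f : Finset (Fin n) → R) (F : Finset (Fin n)) : R :=
  (sumSign F : R) * f Fᶜ

theorem coboundary_apply (f : Finset (Fin n) → R) (V : Finset (Fin n)) :
    coboundary f V = ∑ i ∈ V, (incSign V i : R) * f (V.erase i) := by
  simp_rw [coboundary, inc_eq_sum, Int.cast_sum, sum_mul, Int.cast_ite, Int.cast_zero, ite_mul,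
    zero_mul]
  rw [sum_comm]
  simp

theorem coboundary_eq_zero_of_card_ne {f : Finset (Fin n) → R} {m : ℕ}
    (hf : ∀ F, #F ≠ m → f F = 0) {V : Finset (Fin n)} (hV : #V ≠ m + 1) :
    coboundary f V = 0 :=
  sum_eq_zero fun F _ => by
    by_cases hF : #F = m
    · rw [inc_eq_zero_of_card_ne (by omega), Int.cast_zero, zero_mul]
    · rw [hf F hF, mul_zero]

theorem boundary_eq_zero_of_card_ne {f : Finset (Fin n) → R} {m : ℕ}
    (hf : ∀ G, #G ≠ m → f G = 0) {W : Finset (Fin n)} (hW : #W + 1 ≠ m) :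
    boundary f W = 0 :=
  sum_eq_zero fun G _ => by
    by_cases hG : #G = m
    · rw [inc_eq_zero_of_card_ne (by omega), Int.cast_zero, zero_mul]
    · rw [hf G hG, mul_zero]

theorem coboundary_coboundary (f : Finset (Fin n) → R) : coboundary (coboundary f) = 0 := by
  funext V
  simp_rw [coboundary_apply, mul_sum, Pi.zero_apply]
  rw [← sum_finset_product' V.offDiag V (fun b => V.erase b) (fun p => by grind)]
  refine sum_involution (fun p _ => p.swap) (fun p hp => ?_) (fun p hp _ => ?_)
    (fun p hp => by grind) (fun p _ => rfl)
  · obtain ⟨hb, ha, hba⟩ := mem_offDiag.mp hp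
    have hsign := congrArg (Int.cast : ℤ → R) (incSign_mul_incSign_erase hba hb ha)
    push_cast at hsign
    rw [Prod.fst_swap, Prod.snd_swap, erase_right_comm (a := p.2)]
    linear_combination f ((V.erase p.1).erase p.2) * hsign
  · exact fun h => (mem_offDiag.mp hp).2.2 (congrArg Prod.fst h).symm

theorem cone_apply_of_mem (z : Fin n) (f : Finset (Fin n) → R) {U : Finset (Fin n)}
    (hz : z ∈ U) : cone z f U = 0 := by
  rw [cone, insert_eq_of_mem hz, inc_eq_zero_of_card_ne (by omega), Int.cast_zero, zero_mul]

theorem cone_apply_erase (f : Finset (Fin n) → R) {V : Finset (Fin n)} {z : Fin n}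
    (hz : z ∈ V) : cone z f (V.erase z) = incSign V z * f V := by
  rw [cone, insert_erase hz, inc_erase hz]

-- The cone from `z` is a contracting homotopy of the augmented cochain complex of the simplex.
theorem coboundary_cone_add_cone_coboundary (z : Fin n) (f : Finset (Fin n) → R) :
    coboundary (cone z f) + cone z (coboundary f) = f := by
  funext F
  rw [Pi.add_apply, coboundary_apply]
  by_cases hz : z ∈ F
  · rw [cone_apply_of_mem z _ hz, add_zero, sum_eq_single z, cone_apply_erase f hz, ← mul_assoc]
    · norm_cast
      rw [incSign_mul_self, Int.cast_one, one_mul]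
    · exact fun i _ hiz => by rw [cone_apply_of_mem z f (mem_erase.mpr ⟨hiz.symm, hz⟩), mul_zero]
    · exact fun h => absurd hz h
  · obtain ⟨V, hzV, rfl⟩ : ∃ V, z ∈ V ∧ F = V.erase z :=
      ⟨insert z F, mem_insert_self z F, (erase_insert hz).symm⟩
    rw [cone_apply_erase _ hzV, coboundary_apply, ← add_sum_erase V _ hzV, mul_add, ← mul_assoc,
      ← Int.cast_mul, incSign_mul_self, Int.cast_one, one_mul, add_comm, add_assoc, mul_sum,
      ← sum_add_distrib, add_eq_left]
    refine sum_eq_zero fun i hi => ?_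
    obtain ⟨hiz, hiV⟩ := mem_erase.mp hi
    have hsign := congrArg (Int.cast : ℤ → R) (incSign_erase_mul_incSign_erase hiz.symm hzV hiV)
    push_cast at hsign
    rw [erase_right_comm, cone_apply_erase f (mem_erase.mpr ⟨hiz.symm, hzV⟩)]
    linear_combination f (V.erase i) * hsign

theorem coboundary_cone_of_coboundary_eq_zero (z : Fin n) {f : Finset (Fin n) → R}
    (hf : coboundary f = 0) : coboundary (cone z f) = f := by
  have h := coboundary_cone_add_cone_coboundary z f
  rwa [hf, show cone z (0 : Finset (Fin n) → R) = 0 from funext fun U => mul_zero _,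
    add_zero] at h

theorem boundary_eq_sumSign_mul_coboundary_hodge (f : Finset (Fin n) → R)
    (W : Finset (Fin n)) : boundary f W = sumSign Wᶜ * coboundary (hodge f) Wᶜ := by
  rw [boundary, coboundary, mul_sum]
  refine Fintype.sum_bijective compl compl_bijective _ _ fun G => ?_
  rw [hodge, compl_compl, show inc W G = inc Wᶜᶜ Gᶜᶜ by rw [compl_compl, compl_compl],
    inc_compl_compl]
  push_cast
  ring

end Cochain

section LinearAlgebra

theorem span_image_eq_span_image_iff {K ι κ : Type*} [Field K] [Fintype κ] (a : ι → κ → K)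
    {s t : Set ι} (hts : t ⊆ s) :
    Submodule.span K (a '' t) = Submodule.span K (a '' s) ↔
      ∀ ψ : κ → K, (∀ i ∈ t, ψ ⬝ᵥ a i = 0) → ∀ i ∈ s, ψ ⬝ᵥ a i = 0 := by
  classical
  constructor
  · intro h ψ hψ i hi
    have hle : Submodule.span K (a '' t) ≤ LinearMap.ker (dotProductEquiv K κ ψ) :=
      Submodule.span_le.mpr (Set.image_subset_iff.mpr hψ)
    exact hle (h ▸ Submodule.subset_span (Set.mem_image_of_mem a hi))
  · intro h
    refine le_antisymm (Submodule.span_mono (Set.image_mono hts)) (Submodule.span_le.mpr ?_)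
    rintro _ ⟨i, hi, rfl⟩
    by_contra hai
    obtain ⟨φ, hφi, hφt⟩ := Submodule.exists_dual_map_eq_bot_of_notMem hai inferInstance
    have hφ : ∀ w, (dotProductEquiv K κ).symm φ ⬝ᵥ w = φ w := fun w => by
      rw [← dotProductEquiv_apply_apply, LinearEquiv.apply_symm_apply]
    refine hφi ?_
    rw [← hφ]
    refine h _ (fun j hj => ?_) i hi
    rw [hφ]
    exact LinearMap.le_ker_iff_map.mpr hφt (Submodule.subset_span (Set.mem_image_of_mem a hj))

theorem linearIndependent_finset_iff {R M ι : Type*} [Ring R] [AddCommGroup M] [Module R M]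
    [Fintype ι] (v : ι → M) (s : Finset ι) :
    LinearIndependent R (fun i : s => v i) ↔
      ∀ μ : ι → R, (∀ i ∉ s, μ i = 0) → ∑ i, μ i • v i = 0 → μ = 0 := by
  classical
  have hsum : ∀ μ : ι → R, (∀ i ∉ s, μ i = 0) → ∑ i : s, μ i • v i = ∑ i, μ i • v i :=
    fun μ hμ => by
      rw [sum_coe_sort s fun i => μ i • v i]
      exact sum_subset (subset_univ s) fun i _ hi => by rw [hμ i hi, zero_smul]
  rw [Fintype.linearIndependent_iff]
  constructor
  · intro h μ hμ hμv
    funext i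
    by_cases hi : i ∈ s
    · exact h (fun j => μ j) (by rw [hsum μ hμ, hμv]) ⟨i, hi⟩
    · exact hμ i hi
  · intro h g hg i
    let μ : ι → R := fun j => if hj : j ∈ s then g ⟨j, hj⟩ else 0
    have hμ : ∀ j ∉ s, μ j = 0 := fun j hj => dif_neg hj
    have hgμ : ∀ j : s, g j = μ j := fun j => (dif_pos j.2 : μ j = g ⟨j, j.2⟩).symm
    simp_rw [hgμ] at hg ⊢
    exact congrFun (h μ hμ (by rw [← hsum μ hμ, hg])) i

end LinearAlgebra

def SupportsNoCocycle (R : Type*) [CommRing R] {n : ℕ} (X : Finset (Finset (Fin n))) : Prop :=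
  ∀ f : Finset (Fin n) → R, (∀ F ∉ X, f F = 0) → coboundary f = 0 → f = 0

section Duality

variable {R : Type*} [CommRing R] {n : ℕ}

theorem sumSign_mul_eq_zero_iff (S : Finset (Fin n)) {x : R} :
    (sumSign S : R) * x = 0 ↔ x = 0 := by
  refine ⟨fun h => ?_, fun h => by rw [h, mul_zero]⟩
  simpa [← mul_assoc, ← Int.cast_mul, sumSign_mul_self] using congrArg ((sumSign S : R) * ·) h

theorem supportsNoCocycle_iff_boundary (X : Finset (Finset (Fin n))) :
    SupportsNoCocycle R X ↔
      ∀ μ : Finset (Fin n) → R, (∀ G, Gᶜ ∉ X → μ G = 0) → boundary μ = 0 → μ = 0 := by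
  constructor
  · intro h μ hμX hμ
    have hhodge : hodge μ = 0 := by
      refine h _ (fun F hF => ?_) (funext fun V => ?_)
      · rw [hodge, hμX _ (by rwa [compl_compl]), mul_zero]
      · have hV := boundary_eq_sumSign_mul_coboundary_hodge μ Vᶜ
        rwa [hμ, compl_compl, Pi.zero_apply, eq_comm, sumSign_mul_eq_zero_iff] at hV
    funext G
    simpa [hodge, sumSign_mul_eq_zero_iff] using congrFun hhodge Gᶜ
  · intro h f hfX hf
    let μ : Finset (Fin n) → R := fun G => sumSign Gᶜ * f Gᶜ
    have hμf : hodge μ = f := funext fun F => by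
      simp only [hodge, μ, compl_compl, ← mul_assoc, ← Int.cast_mul, sumSign_mul_self,
        Int.cast_one, one_mul]
    have hμ : μ = 0 := by
      refine h μ (fun G hG => by simp [μ, hfX _ hG]) (funext fun W => ?_)
      rw [boundary_eq_sumSign_mul_coboundary_hodge, hμf, hf, Pi.zero_apply, Pi.zero_apply,
        mul_zero]
    rw [← hμf, hμ]
    funext F
    simp [hodge]

end Duality

section SimplicialMatroid

variable {𝔽 : Type*} [Field 𝔽] {n : ℕ}

theorem dotProduct_bvec_eq_coboundary (f : Finset (Fin n) → 𝔽) {k : ℕ} (hk : 1 ≤ k)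
    {F : Finset (Fin n)} (hF : #F = k) :
    (fun U : Csets n (k - 1) => f U.1) ⬝ᵥ bvec 𝔽 n k F = coboundary f F := by
  rw [dotProduct, coboundary]
  simp only [bvec]
  rw [← sum_subtype {U | #U = k - 1} (by simp) fun U => f U * (inc U F : 𝔽), sum_filter]
  refine sum_congr rfl fun U _ => ?_
  split_ifs with hU
  · exact mul_comm _ _
  · rw [inc_eq_zero_of_card_ne (by omega), Int.cast_zero, zero_mul]

theorem sum_smul_bvec_eq_zero_iff {m : ℕ} {μ : Finset (Fin n) → 𝔽} (hμ : ∀ G, #G ≠ m → μ G = 0) :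
    ∑ G, μ G • bvec 𝔽 n m G = 0 ↔ boundary μ = 0 := by
  have happly : ∀ W : Csets n (m - 1), (∑ G, μ G • bvec 𝔽 n m G) W = boundary μ W.1 :=
    fun W => by simp only [Finset.sum_apply, Pi.smul_apply, smul_eq_mul, bvec, boundary, mul_comm]
  constructor
  · intro h
    funext W
    by_cases hW : #W + 1 = m
    · have hW' := happly ⟨W, by omega⟩
      rwa [h, Pi.zero_apply, eq_comm] at hW'
    · exact boundary_eq_zero_of_card_ne hμ hW
  · intro h
    funext W
    rw [happly, h, Pi.zero_apply, Pi.zero_apply]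

theorem simRank_sdiff_eq_iff [NeZero n] {k : ℕ} (hk : 1 ≤ k) {X : Finset (Finset (Fin n))}
    (hX : X ⊆ powersetCard k univ) :
    simRank 𝔽 n k (powersetCard k univ \ X) = simRank 𝔽 n k (powersetCard k univ) ↔
      SupportsNoCocycle 𝔽 X := by
  set E := powersetCard k (univ : Finset (Fin n))
  have hcardE : ∀ F ∈ E, #F = k := fun F hF => (mem_powersetCard.mp hF).2
  have hspan : Submodule.span 𝔽 (bvec 𝔽 n k '' ↑(E \ X)) ≤ Submodule.span 𝔽 (bvec 𝔽 n k '' ↑E) :=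
    Submodule.span_mono (Set.image_mono (coe_subset.mpr sdiff_subset))
  have hrank : simRank 𝔽 n k (E \ X) = simRank 𝔽 n k E ↔
      Submodule.span 𝔽 (bvec 𝔽 n k '' ↑(E \ X)) = Submodule.span 𝔽 (bvec 𝔽 n k '' ↑E) :=
    ⟨Submodule.eq_of_le_of_finrank_eq hspan, fun h => by simp only [simRank]; rw [h]⟩
  rw [hrank, coe_sdiff, span_image_eq_span_image_iff _ Set.sdiff_subset]
  constructor
  · intro h f hfX hf
    have hcone := coboundary_cone_of_coboundary_eq_zero 0 hf
    have hE := h (fun U => cone 0 f U.1) fun F hF => by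
      rw [dotProduct_bvec_eq_coboundary _ hk (hcardE F hF.1), hcone, hfX F hF.2]
    funext F
    by_cases hFX : F ∈ X
    · rw [← hcone, ← dotProduct_bvec_eq_coboundary _ hk (hcardE F (hX hFX))]
      exact hE F (hX hFX)
    · exact hfX F hFX
  · intro h ψ hψ F hF
    let f : Finset (Fin n) → 𝔽 := fun U => if hU : #U = k - 1 then ψ ⟨U, hU⟩ else 0
    have hψf : ψ = fun U => f U.1 := funext fun U => (dif_pos U.2 : f U = ψ ⟨U, U.2⟩).symm
    have hf : ∀ U, #U ≠ k - 1 → f U = 0 := fun U hU => dif_neg hU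
    rw [hψf] at hψ ⊢
    rw [dotProduct_bvec_eq_coboundary f hk (hcardE F hF)]
    refine congrFun (h (coboundary f) (fun G hG => ?_) (coboundary_coboundary f)) F
    by_cases hGk : #G = k
    · rw [← dotProduct_bvec_eq_coboundary f hk hGk]
      exact hψ G ⟨mem_powersetCard.mpr ⟨subset_univ G, hGk⟩, hG⟩
    · exact coboundary_eq_zero_of_card_ne hf (by omega)

theorem simIndep_image_compl_iff {k : ℕ} {X : Finset (Finset (Fin n))}
    (hX : X ⊆ powersetCard k univ) :
    SimIndep 𝔽 n (n - k) (powersetCard (n - k) univ) (X.image fun F => univ \ F) ↔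
      SupportsNoCocycle 𝔽 X := by
  simp_rw [← compl_eq_univ_sdiff]
  have hmem : ∀ G, G ∈ X.image (fun F => Fᶜ) ↔ Gᶜ ∈ X := fun G =>
    ⟨fun h => by obtain ⟨F, hF, rfl⟩ := mem_image.mp h; rwa [compl_compl],
      fun h => mem_image.mpr ⟨Gᶜ, h, compl_compl G⟩⟩
  have hcard : ∀ G ∈ X.image (fun F => Fᶜ), #G = n - k := fun G hG => by
    rw [← compl_compl G, card_compl, Fintype.card_fin,
      (mem_powersetCard.mp (hX ((hmem G).mp hG))).2]
  have hsub : X.image (fun F => Fᶜ) ⊆ powersetCard (n - k) univ := fun G hG =>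
    mem_powersetCard.mpr ⟨subset_univ G, hcard G hG⟩
  rw [SimIndep, and_iff_right hsub, linearIndependent_finset_iff, supportsNoCocycle_iff_boundary]
  simp only [hmem]
  refine forall_congr' fun μ => imp_congr_right fun hμ => ?_
  rw [sum_smul_bvec_eq_zero_iff fun G hG => hμ G fun hGX => hG (hcard G ((hmem G).mpr hGX))]

end SimplicialMatroid

theorem stmt13 (𝔽 : Type*) [Field 𝔽] (n k : ℕ) (hk : 2 ≤ k) (hkn : k + 2 ≤ n) :
    ∀ X ⊆ Finset.powersetCard k (Finset.univ : Finset (Fin n)),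
      (simRank 𝔽 n k (Finset.powersetCard k (Finset.univ : Finset (Fin n)) \ X)
          = simRank 𝔽 n k (Finset.powersetCard k (Finset.univ : Finset (Fin n)))
        ↔ SimIndep 𝔽 n (n - k) (Finset.powersetCard (n - k) (Finset.univ : Finset (Fin n)))
            (X.image fun F => Finset.univ \ F)) := by
  intro X hX
  have : NeZero n := ⟨by omega⟩
  rw [simRank_sdiff_eq_iff (by omega) hX, simIndep_image_compl_iff hX]
end
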